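/- Let k be a field of characteristic p ≥ 2d and let (c^{r})_{r∈ℕ³} be d×d matrices satisfying the Heisenberg fundamental relation (c^{(0,0,0)} = 1, all but finitely many zero, and c^s c^t = Σ_l C(s_1+t_1−l,t_1) C(s_2+t_2−l,s_2) ((s_3+t_3+l)!/(s_3!t_3!l!)) c^{s+t+(−l,−l,l)}), and additionally that X_{(r)} := c^{(r,0,0)} = Γ(r)^{−1} X_0^{r_0}···X_m^{r_m} with all X_i nilpotent d×d matrices, similarly for Y and Z. Then for each m, [X_m, Y_m] = Z_m, where X_m = c^{(p^m,0,0)}, Y_m = c^{(0,p^m,0)}, Z_m = c^{(0,0,p^m)}. -/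

import Mathlib

/-!
Write `c (a, b, e)` for the Heisenberg family and `P = p ^ m`. The relation gives
`X_m Y_m = ∑_{l ≤ P} c (P - l, P - l, l)` and `Y_m X_m = c (P, P, 0)`, so the commutator is
`c (0, 0, P)` plus the terms `c (n, n, e)` with `n, e ≥ 1`, `n + e = P`. These vanish by
induction on `n`: the relation expands `c (n, 0, e) * c (0, n, 0)` as `c (n, n, e)` plus
multiples of `c (n - l, n - l, e + l)`, `0 < l ≤ n`, which are zero by induction or because
`p ∣ (P choose n)`; and `c (n, 0, e) = c (n, 0, 0) * c (0, 0, e)` is itself zero, because the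
leading base-`p` digits of `n` and `e` add up to at least `p - 1 ≥ 2d - 1`, so one of them is at
least `d` and the corresponding nilpotent factor `X_{m-1} ^ digit` or `Z_{m-1} ^ digit` vanishes.
-/

open Finset

def HeisenbergRelation (k : Type*) {A : Type*} [Semiring k] [Semiring A] [Module k A]
    (c : ℕ × ℕ × ℕ → A) : Prop :=
  ∀ s t : ℕ × ℕ × ℕ,
    c s * c t =
      ∑ l ∈ Finset.range (min s.1 t.2.1 + 1),
        (((s.1 + t.1 - l).choose t.1 * ((s.2.1 + t.2.1 - l).choose s.2.1) *
          ((s.2.2 + t.2.2 + l).factorial /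
            (s.2.2.factorial * t.2.2.factorial * l.factorial)) : ℕ) : k) •
          c (s.1 + t.1 - l, s.2.1 + t.2.1 - l, s.2.2 + t.2.2 + l)

namespace HeisenbergRelation

section Semiring

variable {k A : Type*} [Semiring k] [Semiring A] [Module k A] {c : ℕ × ℕ × ℕ → A}

theorem x_mul_z (hc : HeisenbergRelation k c) (a e : ℕ) :
    c (a, 0, 0) * c (0, 0, e) = c (a, 0, e) := by
  simpa [Nat.div_self (Nat.factorial_pos e)] using hc (a, 0, 0) (0, 0, e)

theorem y_mul_x (hc : HeisenbergRelation k c) (a b : ℕ) :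
    c (0, b, 0) * c (a, 0, 0) = c (a, b, 0) := by
  simpa using hc (0, b, 0) (a, 0, 0)

theorem xz_mul_y (hc : HeisenbergRelation k c) (n e : ℕ) :
    c (n, 0, e) * c (0, n, 0) =
      ∑ l ∈ range (n + 1), ((e + l).choose l : k) • c (n - l, n - l, e + l) := by
  simpa [Nat.add_choose] using hc (n, 0, e) (0, n, 0)

theorem apply_diag_eq_zero {p m : ℕ} [CharP k p] (hc : HeisenbergRelation k c) (hp : p.Prime)
    (hvan : ∀ n e, 0 < n → 0 < e → n + e = p ^ m → c (n, 0, e) = 0) :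
    ∀ n e, 0 < n → 0 < e → n + e = p ^ m → c (n, n, e) = 0 := by
  intro n
  induction n using Nat.strong_induction_on with
  | _ n ih =>
    intro e hn he hne
    have hexp := hc.xz_mul_y n e
    rw [hvan n e hn he hne, zero_mul, sum_range_succ'] at hexp
    have htail : ∀ i ∈ range n,
        ((e + (i + 1)).choose (i + 1) : k) • c (n - (i + 1), n - (i + 1), e + (i + 1)) = 0 := by
      intro i hi
      obtain hlast | hlt := (Nat.succ_le_of_lt (mem_range.1 hi)).eq_or_lt
      · have hdvd : p ∣ (e + (i + 1)).choose (i + 1) := by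
          rw [show e + (i + 1) = p ^ m by omega]
          exact hp.dvd_choose_pow (by omega) (by omega)
        rw [(CharP.cast_eq_zero_iff k p _).2 hdvd, zero_smul]
      · rw [ih (n - (i + 1)) (by omega) (e + (i + 1)) (by omega) (by omega) (by omega), smul_zero]
    simpa [sum_eq_zero htail] using hexp.symm

end Semiring

theorem commutator_eq {k A : Type*} [Semiring k] [Ring A] [Module k A] {c : ℕ × ℕ × ℕ → A}
    {p : ℕ} [CharP k p] (hc : HeisenbergRelation k c) (hp : p.Prime) (m : ℕ)
    (hvan : ∀ n e, 0 < n → 0 < e → n + e = p ^ m → c (n, 0, e) = 0) :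
    c (p ^ m, 0, 0) * c (0, p ^ m, 0) - c (0, p ^ m, 0) * c (p ^ m, 0, 0) = c (0, 0, p ^ m) := by
  have hP : 0 < p ^ m := pow_pos hp.pos m
  have hxy := hc.xz_mul_y (p ^ m) 0
  simp only [zero_add, Nat.choose_self, Nat.cast_one, one_smul] at hxy
  rw [hxy, hc.y_mul_x, sum_range_succ', Nat.sub_zero, add_sub_cancel_right,
    sum_eq_single_of_mem (p ^ m - 1) (mem_range.2 (by omega)), Nat.sub_add_cancel hP, Nat.sub_self]
  intro i hi hne
  have := mem_range.1 hi
  exact hc.apply_diag_eq_zero hp hvan _ _ (by omega) (by omega) (by omega)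

end HeisenbergRelation

theorem List.prod_map_range_pow_eq_zero {M : Type*} [MonoidWithZero M] {W : ℕ → M} {f : ℕ → ℕ}
    {d q : ℕ} (hW : W q ^ d = 0) (hf : d ≤ f q) :
    ((List.range (q + 1)).map fun i => W i ^ f i).prod = 0 :=
  List.prod_eq_zero (List.mem_map.2 ⟨q, List.mem_range.2 q.lt_succ_self, pow_eq_zero_of_le hf hW⟩)

theorem Nat.le_div_pow_mod_or_le_div_pow_mod_of_add_eq_pow {p d q n e : ℕ} (hp : 0 < p)
    (hpd : 2 * d ≤ p) (hn : 0 < n) (he : 0 < e) (hne : n + e = p ^ (q + 1)) :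
    d ≤ n / p ^ q % p ∨ d ≤ e / p ^ q % p := by
  have hb : 0 < p ^ q := pow_pos hp q
  rw [pow_succ] at hne
  have hnlt : n / p ^ q < p := Nat.div_lt_of_lt_mul (by omega)
  have helt : e / p ^ q < p := Nat.div_lt_of_lt_mul (by omega)
  have hsum : p < n / p ^ q + e / p ^ q + 2 := by
    refine Nat.lt_of_mul_lt_mul_right (a := p ^ q) ?_
    have := Nat.lt_div_mul_add (a := n) hb
    have := Nat.lt_div_mul_add (a := e) hb
    nlinarith
  rw [Nat.mod_eq_of_lt hnlt, Nat.mod_eq_of_lt helt]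
  omega

theorem stmt_17_general {k : Type*} [Field k] {p d : ℕ} [hp : Fact p.Prime] [CharP k p]
    (hpd : 2 * d ≤ p)
    (c : ℕ × ℕ × ℕ → Matrix (Fin d) (Fin d) k)
    (hrel : ∀ s t : ℕ × ℕ × ℕ,
      c s * c t =
        ∑ l ∈ Finset.range (min s.1 t.2.1 + 1),
          (((s.1 + t.1 - l).choose t.1 * ((s.2.1 + t.2.1 - l).choose s.2.1) *
            ((s.2.2 + t.2.2 + l).factorial /
              (s.2.2.factorial * t.2.2.factorial * l.factorial)) : ℕ) : k) •
            c (s.1 + t.1 - l, s.2.1 + t.2.1 - l, s.2.2 + t.2.2 + l))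
    (X Z : ℕ → Matrix (Fin d) (Fin d) k)
    (hXnil : ∀ i, X i ^ d = 0) (hZnil : ∀ i, Z i ^ d = 0)
    (hX : ∀ r m, r < p ^ (m + 1) →
      c (r, 0, 0) = (∏ i ∈ Finset.range (m + 1), ((r / p ^ i % p).factorial : k))⁻¹ •
        ((List.range (m + 1)).map (fun i => X i ^ (r / p ^ i % p))).prod)
    (hZ : ∀ r m, r < p ^ (m + 1) →
      c (0, 0, r) = (∏ i ∈ Finset.range (m + 1), ((r / p ^ i % p).factorial : k))⁻¹ •
        ((List.range (m + 1)).map (fun i => Z i ^ (r / p ^ i % p))).prod) :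
    ∀ m, c (p ^ m, 0, 0) * c (0, p ^ m, 0) - c (0, p ^ m, 0) * c (p ^ m, 0, 0) =
      c (0, 0, p ^ m) := by
  have hc : HeisenbergRelation k c := hrel
  intro m
  refine hc.commutator_eq hp.out m fun n e hn he hne => ?_
  rcases m with _ | q
  · rw [pow_zero] at hne
    omega
  have hlt : n < p ^ (q + 1) ∧ e < p ^ (q + 1) := by omega
  rw [← hc.x_mul_z]
  rcases Nat.le_div_pow_mod_or_le_div_pow_mod_of_add_eq_pow hp.out.pos hpd hn he hne with hd | hd
  · rw [hX n q hlt.1, List.prod_map_range_pow_eq_zero (hXnil q) hd, smul_zero, zero_mul]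
  · rw [hZ e q hlt.2, List.prod_map_range_pow_eq_zero (hZnil q) hd, smul_zero, mul_zero]

theorem stmt_17 {k : Type*} [Field k] {p d : ℕ} [hp : Fact p.Prime] [CharP k p]
    (hpd : 2 * d ≤ p)
    (c : ℕ × ℕ × ℕ → Matrix (Fin d) (Fin d) k)
    (hfin : ∃ N, ∀ r : ℕ × ℕ × ℕ, N < r.1 + r.2.1 + r.2.2 → c r = 0)
    (h0 : c (0, 0, 0) = 1)
    (hrel : ∀ s t : ℕ × ℕ × ℕ,
      c s * c t =
        ∑ l ∈ Finset.range (min s.1 t.2.1 + 1),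
          (((s.1 + t.1 - l).choose t.1 * ((s.2.1 + t.2.1 - l).choose s.2.1) *
            ((s.2.2 + t.2.2 + l).factorial /
              (s.2.2.factorial * t.2.2.factorial * l.factorial)) : ℕ) : k) •
            c (s.1 + t.1 - l, s.2.1 + t.2.1 - l, s.2.2 + t.2.2 + l))
    (X Y Z : ℕ → Matrix (Fin d) (Fin d) k)
    (hXnil : ∀ i, X i ^ d = 0) (hYnil : ∀ i, Y i ^ d = 0) (hZnil : ∀ i, Z i ^ d = 0)
    (hX : ∀ r m, r < p ^ (m + 1) →
      c (r, 0, 0) = (∏ i ∈ Finset.range (m + 1), ((r / p ^ i % p).factorial : k))⁻¹ •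
        ((List.range (m + 1)).map (fun i => X i ^ (r / p ^ i % p))).prod)
    (hY : ∀ r m, r < p ^ (m + 1) →
      c (0, r, 0) = (∏ i ∈ Finset.range (m + 1), ((r / p ^ i % p).factorial : k))⁻¹ •
        ((List.range (m + 1)).map (fun i => Y i ^ (r / p ^ i % p))).prod)
    (hZ : ∀ r m, r < p ^ (m + 1) →
      c (0, 0, r) = (∏ i ∈ Finset.range (m + 1), ((r / p ^ i % p).factorial : k))⁻¹ •
        ((List.range (m + 1)).map (fun i => Z i ^ (r / p ^ i % p))).prod) :
    ∀ m, c (p ^ m, 0, 0) * c (0, p ^ m, 0) - c (0, p ^ m, 0) * c (p ^ m, 0, 0) =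
      c (0, 0, p ^ m) :=
  stmt_17_general (hp := hp) hpd c hrel X Z hXnil hZnil hX hZ
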